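/- Let κ ∈ (0,4) and define u : [0,1) × B̄(0,1) → ℝ³ by u(t,x) = x / √(κ(1-t) + |x|²). Then for each t ∈ [0,1), u(t,·) is real analytic on B̄(0,1), u is bounded by 1 on [0,1) × B̄(0,1), but the limit function x ↦ x/|x| has no continuous extension to x = 0. -/

import Mathlib

/-!
For `t < 1` the map is `x ↦ (√(c + ‖x‖²))⁻¹ • x` with `c = κ (1 - t) > 0`: a composition of
smooth operations away from the zero of `√`, hence `C^ω`, i.e. analytic, and its norm is
`‖x‖ / √(c + ‖x‖²) ≤ 1`. The normalisation `x ↦ x / ‖x‖` is constant equal to `v` along each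
open ray `r • v`, `r > 0`, so a continuous extension would take the value `v` and `-v` at `0`.
-/

open Metric Filter Topology
open scoped ContDiff

theorem analyticAt_inv_sqrt_add_norm_sq_smul {E : Type*} [NormedAddCommGroup E]
    [InnerProductSpace ℝ E] {c : ℝ} (hc : 0 < c) (x : E) :
    AnalyticAt ℝ (fun y : E => (√(c + ‖y‖ ^ 2))⁻¹ • y) x := by
  have hpos : 0 < c + ‖x‖ ^ 2 := by positivity
  have hsmooth : ContDiffAt ℝ ω (fun y : E => (√(c + ‖y‖ ^ 2))⁻¹ • y) x :=
    ((contDiffAt_const.add (contDiff_norm_sq ℝ).contDiffAt).sqrt hpos.ne').inv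
      (Real.sqrt_pos.2 hpos).ne' |>.smul contDiffAt_id
  exact hsmooth.analyticAt

theorem norm_inv_sqrt_add_norm_sq_smul_le_one {E : Type*} [SeminormedAddCommGroup E]
    [NormedSpace ℝ E] {c : ℝ} (hc : 0 ≤ c) (x : E) :
    ‖(√(c + ‖x‖ ^ 2))⁻¹ • x‖ ≤ 1 := by
  have hle : ‖x‖ ≤ √(c + ‖x‖ ^ 2) := Real.le_sqrt_of_sq_le (by linarith)
  rw [norm_smul, norm_inv, Real.norm_of_nonneg (Real.sqrt_nonneg _)]
  exact inv_mul_le_one_of_le₀ hle (Real.sqrt_nonneg _)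

section Normalize

variable {E : Type*} [NormedAddCommGroup E] [NormedSpace ℝ E] {g : E → E} {s : Set E}

theorem eq_of_continuousAt_of_eq_normalize (hs : s ∈ 𝓝 0)
    (hg : ∀ x ∈ s, x ≠ 0 → g x = ‖x‖⁻¹ • x) (hcont : ContinuousAt g 0)
    {v : E} (hv : ‖v‖ = 1) : g 0 = v := by
  have hray : Tendsto (fun r : ℝ => r • v) (𝓝[>] (0 : ℝ)) (𝓝 0) := by
    simpa using ((tendsto_id (x := 𝓝 (0 : ℝ))).mono_left nhdsWithin_le_nhds).smul_const v
  have hconst : ∀ᶠ r in 𝓝[>] (0 : ℝ), g (r • v) = v := by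
    filter_upwards [hray hs, self_mem_nhdsWithin] with r hrs hr
    have hr : 0 < r := hr
    have hv0 : v ≠ 0 := norm_ne_zero_iff.1 (hv ▸ one_ne_zero)
    rw [hg _ hrs (smul_ne_zero hr.ne' hv0), norm_smul, hv, mul_one, Real.norm_of_nonneg hr.le,
      smul_smul, inv_mul_cancel₀ hr.ne', one_smul]
  exact tendsto_nhds_unique (hcont.tendsto.comp hray)
    (tendsto_const_nhds.congr' (hconst.mono fun _ h => h.symm))

theorem not_continuousAt_of_eq_normalize [Nontrivial E] (hs : s ∈ 𝓝 0)
    (hg : ∀ x ∈ s, x ≠ 0 → g x = ‖x‖⁻¹ • x) : ¬ ContinuousAt g 0 := by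
  intro hcont
  obtain ⟨v, hv⟩ := exists_norm_eq E zero_le_one
  have hpos : g 0 = v := eq_of_continuousAt_of_eq_normalize hs hg hcont hv
  have hneg : g 0 = -v :=
    eq_of_continuousAt_of_eq_normalize hs hg hcont (by rw [norm_neg, hv])
  have htwo : (2 : ℝ) • v = 0 := by
    rw [two_smul]
    nth_rw 1 [← hpos]
    rw [hneg, neg_add_cancel]
  simpa [norm_smul, hv] using congrArg norm htwo

end Normalize

/-- The John–Stará example: u(t,x) = x/√(κ(1-t)+|x|²) is, for each t ∈ [0,1),
real analytic on the closed unit ball of ℝ³ and bounded by 1, but the limit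
function x ↦ x/|x| admits no continuous extension to x = 0. -/
theorem john_stara_example (κ : ℝ) (hκ : κ ∈ Set.Ioo (0 : ℝ) 4)
    (u : ℝ → EuclideanSpace ℝ (Fin 3) → EuclideanSpace ℝ (Fin 3))
    (hu : ∀ t x, u t x = (Real.sqrt (κ * (1 - t) + ‖x‖ ^ 2))⁻¹ • x) :
    (∀ t ∈ Set.Ico (0 : ℝ) 1, AnalyticOn ℝ (u t) (closedBall 0 1)) ∧
    (∀ t ∈ Set.Ico (0 : ℝ) 1, ∀ x ∈ closedBall (0 : EuclideanSpace ℝ (Fin 3)) 1,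
      ‖u t x‖ ≤ 1) ∧
    ¬ ∃ g : EuclideanSpace ℝ (Fin 3) → EuclideanSpace ℝ (Fin 3),
        ContinuousOn g (closedBall 0 1) ∧
        ∀ x ∈ closedBall (0 : EuclideanSpace ℝ (Fin 3)) 1, x ≠ 0 →
          g x = ‖x‖⁻¹ • x := by
  have hc : ∀ t ∈ Set.Ico (0 : ℝ) 1, 0 < κ * (1 - t) := fun t ht =>
    mul_pos hκ.1 (by linarith [ht.2])
  refine ⟨fun t ht x _ => ?_, fun t ht x _ => ?_, ?_⟩
  · rw [show u t = _ from funext (hu t)]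
    exact (analyticAt_inv_sqrt_add_norm_sq_smul (hc t ht) x).analyticWithinAt
  · rw [hu]
    exact norm_inv_sqrt_add_norm_sq_smul_le_one (hc t ht).le x
  · rintro ⟨g, hgc, hg⟩
    have hball : closedBall (0 : EuclideanSpace ℝ (Fin 3)) 1 ∈ 𝓝 0 := closedBall_mem_nhds 0 one_pos
    exact not_continuousAt_of_eq_normalize hball hg (hgc.continuousAt hball)
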